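/- arXiv:1712.02569 — 2 statements merged into one kernel-verified Lean document; each statement's English description precedes it below -/
import Mathlib

section
/- The space 𝒳 of all finite graphs of strictly decreasing partial functions from ω₁ to ω₁, with the topology inherited from {0,1}^(ω₁×ω₁), is not bisequential. -/
open Cardinal Filter Topology Set

noncomputable section
open Classical

/-- `ω₁`, the first uncountable ordinal, viewed as the linearly ordered type of
all countable ordinals. -/
abbrev Omega1 : Type 1 := ↥(Set.Iio (Cardinal.aleph 1).ord)

/-- The vertical section `A_α = {β : (α, β) ∈ A}`. -/
def vertSection (A : Set (Omega1 × Omega1)) (α : Omega1) : Set Omega1 :=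
  {β | (α, β) ∈ A}

/-- The horizontal section `A^α = {γ : (γ, α) ∈ A}`. -/
def horSection (A : Set (Omega1 × Omega1)) (α : Omega1) : Set Omega1 :=
  {γ | (γ, α) ∈ A}

/-- Membership in the σ-ideal `𝓘`: for all but countably many `α ∈ ω₁` both the
vertical and the horizontal section of `A` at `α` are countable. -/
def MemIdealI (A : Set (Omega1 × Omega1)) : Prop :=
  {α : Omega1 | ¬ ((vertSection A α).Countable ∧ (horSection A α).Countable)}.Countable

/-- `F` is a finite graph of a strictly decreasing partial function: `F` is finite,
contains no two pairs with the same first coordinate, and whenever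
`(α,β), (α',β') ∈ F` with `α < α'` then `β > β'`. -/
def IsDecGraph {T : Type*} [LinearOrder T] (F : Set (T × T)) : Prop :=
  F.Finite ∧ (∀ p ∈ F, ∀ q ∈ F, p.1 = q.1 → p = q) ∧
    (∀ p ∈ F, ∀ q ∈ F, p.1 < q.1 → q.2 < p.2)

/-- The characteristic function of a set, with values in `{0,1} = Bool`. -/
def chi {T : Type*} (A : Set T) : T → Bool := fun x => if x ∈ A then true else false

/-- The space `𝒳` (over a linear order `T`) of characteristic functions of finite
graphs of strictly decreasing partial functions on `T`, viewed as a subset of the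
product space `{0,1}^(T × T)`; it carries the subspace topology. -/
def XSpace (T : Type*) [LinearOrder T] : Set ((T × T) → Bool) :=
  {f | ∃ F : Set (T × T), IsDecGraph F ∧ f = chi F}

/-- The space `𝒳_B = {A ∈ 𝒳 : A ⊆ B}`, as a subset of `{0,1}^(ω₁ × ω₁)`. -/
def XSpaceIn (B : Set (Omega1 × Omega1)) : Set ((Omega1 × Omega1) → Bool) :=
  {f | ∃ F : Set (Omega1 × Omega1), IsDecGraph F ∧ F ⊆ B ∧ f = chi F}

/-- The support of a point of `{0,1}^T`: the set of which it is the
characteristic function. -/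
def supp {T : Type*} (f : T → Bool) : Set T := {x | f x = true}

/-- A topological space `X` is bisequential if for every ultrafilter `𝒰` on `X`
converging to a point `x` (every neighbourhood of `x` belongs to `𝒰`) there is a
decreasing sequence `U₀ ⊇ U₁ ⊇ ⋯` of members of `𝒰` converging to `x` (every
neighbourhood of `x` contains `Uₙ` for all sufficiently large `n`). -/
def Bisequential (X : Type*) [TopologicalSpace X] : Prop :=
  ∀ (𝒰 : Ultrafilter X) (x : X), (𝒰 : Filter X) ≤ 𝓝 x →
    ∃ U : ℕ → Set X, (∀ n, U n ∈ 𝒰) ∧ (∀ n, U (n + 1) ⊆ U n) ∧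
      ∀ V ∈ 𝓝 x, ∀ᶠ n in atTop, U n ⊆ V

/-!
Call `A ⊆ ω₁ × ω₁` large if unboundedly many of its columns `{β | (α, β) ∈ A}` are unbounded.
For finitely many large sets and a finite set `P` of pairs there is a decreasing graph avoiding `P`
and meeting each of them: choose an unbounded column of one large set, build the graph for the
others to the right of that column, and add a point of the column above all of it. Hence the
neighbourhoods of the empty graph together with the sets "the graph meets `A`", `A` large,
generate a proper filter, and an ultrafilter `𝒰` refining it converges to `∅`. Given
`U₀, U₁, … ∈ 𝒰`, the set `Aₙ` of pairs lying in no graph of `Uₙ` is not large, since "meets `Aₙ`"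
is disjoint from `Uₙ`. As countable subsets of `ω₁` are bounded, some pair `(α, β)` lies outside
every `Aₙ`, so every `Uₙ` contains a graph through `(α, β)` and no `Uₙ` fits in the neighbourhood
"`(α, β)` is absent" of `∅`.
-/

variable {T : Type*} [LinearOrder T]

lemma isDecGraph_empty : IsDecGraph (∅ : Set (T × T)) :=
  ⟨finite_empty, by simp, by simp⟩

lemma IsDecGraph.insert_of_lt {F : Set (T × T)} (hF : IsDecGraph F) {a b : T}
    (h : ∀ p ∈ F, a < p.1 ∧ p.2 < b) : IsDecGraph (insert (a, b) F) := by
  obtain ⟨hfin, hfun, hdec⟩ := hF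
  refine ⟨hfin.insert _, ?_, ?_⟩
  · rintro p (rfl | hp) q (rfl | hq) hpq
    · rfl
    · exact absurd hpq (h q hq).1.ne
    · exact absurd hpq.symm (h p hp).1.ne
    · exact hfun p hp q hq hpq
  · rintro p (rfl | hp) q (rfl | hq) hpq
    · exact absurd hpq (lt_irrefl _)
    · exact (h q hq).2
    · exact absurd hpq (h p hp).1.not_gt
    · exact hdec p hp q hq hpq

lemma nhds_subtype_pi_discrete {ι X : Type*} [TopologicalSpace X] [DiscreteTopology X]
    {S : Set (ι → X)} (x : S) : 𝓝 x = ⨅ i, 𝓟 {y : S | y.1 i = x.1 i} := by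
  simp [nhds_subtype, nhds_pi, Filter.pi, nhds_discrete, comap_iInf, comap_pure, preimage]

lemma Omega1.exists_gt_of_countable {s : Set Omega1} (hs : s.Countable) :
    ∃ b : Omega1, ∀ a ∈ s, a < b := by
  have : Countable s := hs.to_subtype
  have hsup : (⨆ a : s, a.1.1) < (aleph 1).ord := by
    simpa only [ord_aleph] using Ordinal.iSup_lt_omega_one fun a : s => by
      simpa only [ord_aleph, mem_Iio] using a.1.2
  refine ⟨⟨Order.succ (⨆ a : s, a.1.1), ?_⟩, fun a ha => ?_⟩
  · exact (isSuccLimit_ord (aleph0_le_aleph 1)).succ_lt hsup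
  · exact Subtype.coe_lt_coe.1 <|
      Order.lt_succ_iff.2 (Ordinal.le_iSup (fun a : s => a.1.1) ⟨a, ha⟩)

namespace XSpace

-- For `T = ω₁`, where bounded means countable, this says that `A` violates the vertical half of
-- `MemIdealI A`.
def IsLarge (A : Set (T × T)) : Prop :=
  ¬ BddAbove {α | ¬ BddAbove {β | (α, β) ∈ A}}

lemma exists_forall_notMem_of_not_isLarge
    (hT : ∀ s : Set T, s.Countable → ∃ b, ∀ a ∈ s, a < b)
    {A : ℕ → Set (T × T)} (hA : ∀ n, ¬ IsLarge (A n)) : ∃ p, ∀ n, p ∉ A n := by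
  choose a ha using fun n => not_not.1 (hA n)
  obtain ⟨α, hα⟩ := hT (range a) (countable_range a)
  have hcol : ∀ n, BddAbove {β | (α, β) ∈ A n} := fun n => by
    by_contra h
    exact (hα _ (mem_range_self n)).not_ge (ha n h)
  choose b hb using hcol
  obtain ⟨β, hβ⟩ := hT (range b) (countable_range b)
  exact ⟨(α, β), fun n h => (hβ _ (mem_range_self n)).not_ge (hb n h)⟩

lemma exists_isDecGraph_inter_nonempty {𝒜 : Set (Set (T × T))} (h𝒜 : 𝒜.Finite)
    (hlarge : ∀ A ∈ 𝒜, IsLarge A) (δ γ : T) :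
    ∃ F, IsDecGraph F ∧ (∀ p ∈ F, δ < p.1 ∧ γ < p.2) ∧ ∀ A ∈ 𝒜, (F ∩ A).Nonempty := by
  induction 𝒜, h𝒜 using Set.Finite.induction_on generalizing δ with
  | empty => exact ⟨∅, isDecGraph_empty, by simp, by simp⟩
  | @insert A₀ 𝒜 _ _ ih =>
    obtain ⟨α₀, hα₀, hδα₀⟩ := not_bddAbove_iff.1 (hlarge A₀ (mem_insert _ _)) δ
    obtain ⟨F, hF, hFbound, hFmeets⟩ := ih (fun A hA => hlarge A (mem_insert_of_mem _ hA)) α₀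
    have : Nonempty T := ⟨γ⟩
    obtain ⟨b, hb⟩ := ((hF.1.image Prod.snd).insert γ).bddAbove
    obtain ⟨β₀, hβ₀, hbβ₀⟩ := not_bddAbove_iff.1 hα₀ b
    have hβ₀_gt : ∀ p ∈ F, p.2 < β₀ := fun p hp =>
      (hb (mem_insert_of_mem _ (mem_image_of_mem _ hp))).trans_lt hbβ₀
    refine ⟨insert (α₀, β₀) F, hF.insert_of_lt fun p hp => ⟨(hFbound p hp).1, hβ₀_gt p hp⟩,
      ?_, ?_⟩
    · rintro p (rfl | hp)
      · exact ⟨hδα₀, (hb (mem_insert _ _)).trans_lt hbβ₀⟩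
      · exact ⟨hδα₀.trans (hFbound p hp).1, (hFbound p hp).2⟩
    · rintro A (rfl | hA)
      · exact ⟨_, mem_insert _ _, hβ₀⟩
      · exact (hFmeets A hA).mono (inter_subset_inter_left _ (subset_insert _ _))

def mk (F : Set (T × T)) (hF : IsDecGraph F) : XSpace T :=
  ⟨chi F, F, hF, rfl⟩

@[simp]
lemma mk_apply {F : Set (T × T)} {hF : IsDecGraph F} {p : T × T} :
    (mk F hF).1 p = decide (p ∈ F) := by
  simp [mk, chi]

abbrev emptyGraph : XSpace T :=
  mk ∅ isDecGraph_empty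

lemma nhds_emptyGraph : 𝓝 (emptyGraph : XSpace T) = ⨅ p, 𝓟 {f : XSpace T | f.1 p = false} := by
  simp [nhds_subtype_pi_discrete]

def largeFilter : Filter (XSpace T) :=
  𝓝 emptyGraph ⊓ ⨅ A : {A : Set (T × T) // IsLarge A}, 𝓟 {f | ∃ p ∈ A.1, f.1 p = true}

instance neBot_largeFilter [Nonempty T] : (largeFilter : Filter (XSpace T)).NeBot := by
  rw [largeFilter, nhds_emptyGraph]
  refine ((hasBasis_iInf_principal_finite _).inf (hasBasis_iInf_principal_finite _)).neBot_iff.2 ?_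
  rintro ⟨P, 𝒜⟩ ⟨hP, h𝒜⟩
  obtain ⟨γ, hγ⟩ := (hP.image Prod.snd).bddAbove
  obtain ⟨F, hF, hFbound, hFmeets⟩ := exists_isDecGraph_inter_nonempty (h𝒜.image Subtype.val)
    (by rintro _ ⟨A, -, rfl⟩; exact A.2) γ γ
  refine ⟨mk F hF, mem_iInter₂.2 fun p hp => ?_, mem_iInter₂.2 fun A hA => ?_⟩
  · have hpF : p ∉ F := fun hpF => (hFbound p hpF).2.not_ge (hγ (mem_image_of_mem _ hp))
    simpa using hpF
  · obtain ⟨q, hqF, hqA⟩ := hFmeets A ⟨A, hA, rfl⟩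
    exact ⟨q, hqA, by simpa using hqF⟩

theorem not_bisequential (hT : ∀ s : Set T, s.Countable → ∃ b, ∀ a ∈ s, a < b) :
    ¬ Bisequential (XSpace T) := by
  have : Nonempty T := ⟨(hT ∅ countable_empty).choose⟩
  intro hbis
  set 𝒰 := Ultrafilter.of (largeFilter : Filter (XSpace T))
  obtain ⟨U, hU, -, hconv⟩ := hbis 𝒰 emptyGraph ((Ultrafilter.of_le _).trans inf_le_left)
  have hA : ∀ n, ¬ IsLarge {p | ∀ f ∈ U n, f.1 p = false} := fun n hn => by
    have hmeets : {f : XSpace T | ∃ p ∈ {p | ∀ f ∈ U n, f.1 p = false}, f.1 p = true} ∈ 𝒰 :=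
      Ultrafilter.of_le _ <| inf_le_right (a := 𝓝 emptyGraph) <|
        mem_iInf_of_mem ⟨_, hn⟩ (mem_principal_self _)
    obtain ⟨f, ⟨p, hp, hfp⟩, hf⟩ := 𝒰.nonempty_of_mem (inter_mem hmeets (hU n))
    simp [hp f hf] at hfp
  obtain ⟨p, hp⟩ := exists_forall_notMem_of_not_isLarge hT hA
  have habsent : {f : XSpace T | f.1 p = false} ∈ 𝓝 emptyGraph := by
    rw [nhds_emptyGraph]
    exact mem_iInf_of_mem p (mem_principal_self _)
  obtain ⟨n, hn⟩ := (hconv _ habsent).exists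
  exact hp n hn

end XSpace

/-- The space `𝒳` of all finite graphs of strictly decreasing partial functions from
`ω₁` to `ω₁`, with the topology inherited from `{0,1}^(ω₁ × ω₁)`, is not bisequential. -/
theorem XSpace_not_bisequential : ¬ Bisequential ↥(XSpace Omega1) :=
  XSpace.not_bisequential fun _ => Omega1.exists_gt_of_countable

end
end

section
/- The space 𝒳 is not a uniform Eberlein compactum: there is no Hilbert space H and no topological embedding of 𝒳 into H equipped with its weak topology. -/
open Cardinal Filter Topology Set

noncomputable section
open Classical

universe u

/-!
Let `f : 𝒳 → H` be injective and weakly continuous. By compactness and uniform boundedness,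
`‖f‖ ≤ C`. For each `s ∈ ω₁ × ω₁`, erasing `s` moves `f` by at least some `ε_s > 0` in norm (the
norm is weakly lower semicontinuous and `𝒳` is compact), so for some `δ > 0` infinitely many
columns `α` contain uncountably many `s = (α, β)` with `ε_s ≥ δ`. Going down through `k` such
columns, we add one point `(α, β)` per column, with `β` above the second coordinates used so far
and so large that the increment `w` of `f` is almost orthogonal to the current value `f x`: the
enlarged graph converges to `x` as `β` escapes every finite set. Since `‖w‖ ≥ δ`, each step raises
`‖f x‖²` by at least `δ² / 2`, which is absurd once `k δ² / 2 > C²`.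
-/

open scoped RealInnerProductSpace

section WeaklyContinuous
variable {X H : Type*} [TopologicalSpace X] [NormedAddCommGroup H] [InnerProductSpace ℝ H]
  {f : X → H}

theorem lowerSemicontinuous_norm_of_continuous_inner
    (hf : ∀ v, Continuous fun x => ⟪v, f x⟫) : LowerSemicontinuous fun x => ‖f x‖ := by
  intro x t ht
  rcases eq_or_ne (f x) 0 with hx | hx
  · exact .of_forall fun y => ht.trans_le (by simp [hx])
  have hpos : 0 < ‖f x‖ := norm_pos_iff.2 hx
  -- testing against `f x` itself: `⟪f x, f y⟫ > t ‖f x‖` forces `‖f y‖ > t` by Cauchy–Schwarz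
  have hlt : t * ‖f x‖ < ⟪f x, f x⟫ := by
    rw [real_inner_self_eq_norm_sq]; nlinarith
  filter_upwards [(hf (f x)).continuousAt.eventually_const_lt hlt] with y hy
  exact lt_of_mul_lt_mul_right
    (hy.trans_le ((real_inner_le_norm _ _).trans_eq (mul_comm _ _))) hpos.le

theorem IsCompact.exists_pos_le_norm_of_continuous_inner {K : Set X} (hK : IsCompact K)
    (hf : ∀ v, Continuous fun x => ⟪v, f x⟫) (h0 : ∀ x ∈ K, f x ≠ 0) :
    ∃ ε > 0, ∀ x ∈ K, ε ≤ ‖f x‖ := by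
  rcases K.eq_empty_or_nonempty with rfl | hne
  · exact ⟨1, one_pos, by simp⟩
  obtain ⟨a, ha, hmin⟩ :=
    ((lowerSemicontinuous_norm_of_continuous_inner hf).lowerSemicontinuousOn K).exists_isMinOn
      hne hK
  exact ⟨‖f a‖, norm_pos_iff.2 (h0 a ha), fun x hx => hmin hx⟩

theorem exists_norm_le_of_continuous_inner [CompactSpace X] [CompleteSpace H]
    (hf : ∀ v, Continuous fun x => ⟪v, f x⟫) : ∃ C, ∀ x, ‖f x‖ ≤ C := by
  have hbdd : ∀ v : H, ∃ C, ∀ x, ‖innerSL ℝ (f x) v‖ ≤ C := fun v => by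
    obtain ⟨C, hC⟩ := (isCompact_range (hf v).norm).bddAbove
    exact ⟨C, fun x => by simpa [real_inner_comm] using hC ⟨x, rfl⟩⟩
  obtain ⟨C, hC⟩ := banach_steinhaus hbdd
  exact ⟨C, fun x => by simpa using hC x⟩

theorem continuous_inner_symm_toWeakSpace {φ : X → WeakSpace ℝ H} (hφ : Continuous φ) (v : H) :
    Continuous fun x => ⟪v, (toWeakSpace ℝ H).symm (φ x)⟫ :=
  (WeakBilin.eval_continuous (topDualPairing ℝ H).flip (innerSL ℝ v)).comp hφ

end WeaklyContinuous

theorem tendsto_update_cofinite {ι A : Type*} [TopologicalSpace A] [DecidableEq ι] (f : ι → A)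
    (a : A) : Tendsto (fun i => Function.update f i a) cofinite (𝓝 f) :=
  tendsto_pi_nhds.2 fun j => tendsto_nhds_of_eventually_eq <|
    (eventually_cofinite_ne j).mono fun _ hi => Function.update_of_ne hi.symm _ _

section Supp
variable {α : Type*}

theorem supp_chi (A : Set α) : supp (chi A) = A := by
  ext; simp [supp, chi]

theorem chi_supp (f : α → Bool) : chi (supp f) = f := by
  ext x; cases h : f x <;> simp [supp, chi, h]

variable [DecidableEq α]

theorem supp_update_true (f : α → Bool) (s : α) :
    supp (Function.update f s true) = insert s (supp f) := by
  ext t; by_cases h : t = s <;> simp [supp, h]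

theorem supp_update_false (f : α → Bool) (s : α) :
    supp (Function.update f s false) = supp f \ {s} := by
  ext t; by_cases h : t = s <;> simp [supp, h]

end Supp

section XSpace
variable {T : Type*} [LinearOrder T]

theorem mem_XSpace_iff {f : T × T → Bool} : f ∈ XSpace T ↔ IsDecGraph (supp f) :=
  ⟨by rintro ⟨F, hF, rfl⟩; rwa [supp_chi], fun h => ⟨_, h, (chi_supp f).symm⟩⟩

theorem IsDecGraph.mono {F G : Set (T × T)} (hF : IsDecGraph F) (hG : G ⊆ F) : IsDecGraph G :=
  ⟨hF.1.subset hG, fun p hp q hq => hF.2.1 p (hG hp) q (hG hq),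
    fun p hp q hq => hF.2.2 p (hG hp) q (hG hq)⟩

theorem IsDecGraph.insert {F : Set (T × T)} (hF : IsDecGraph F) {p : T × T}
    (hp : ∀ q ∈ F, p.1 < q.1 ∧ q.2 < p.2) : IsDecGraph (insert p F) := by
  refine ⟨hF.1.insert p, ?_, ?_⟩
  · rintro q (rfl | hq) r (rfl | hr) h
    · rfl
    · exact absurd h (hp r hr).1.ne
    · exact absurd h (hp q hq).1.ne'
    · exact hF.2.1 q hq r hr h
  · rintro q (rfl | hq) r (rfl | hr) h
    · exact absurd h (lt_irrefl _)
    · exact (hp r hr).2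
    · exact absurd h (hp q hq).1.not_gt
    · exact hF.2.2 q hq r hr h

theorem isDecGraph_iff_of_wellFoundedLT [WellFoundedLT T] {F : Set (T × T)} :
    IsDecGraph F ↔ ∀ p ∈ F, ∀ q ∈ F, (p.1 = q.1 → p = q) ∧ (p.1 < q.1 → q.2 < p.2) := by
  refine ⟨fun h p hp q hq => ⟨h.2.1 p hp q hq, h.2.2 p hp q hq⟩, fun h => ⟨?_, fun p hp q hq =>
    (h p hp q hq).1, fun p hp q hq => (h p hp q hq).2⟩⟩
  refine WellQuasiOrderedLE.finite_of_isAntichain fun p hp q hq hne hle => ?_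
  rcases hle.1.lt_or_eq with h1 | h1
  · exact (h p hp q hq).2 h1 |>.not_ge hle.2
  · exact hne ((h p hp q hq).1 h1)

theorem isClosed_XSpace [WellFoundedLT T] : IsClosed (XSpace T) := by
  have : XSpace T = ⋂ (p : T × T) (q : T × T), (fun f : T × T → Bool => (f p, f q)) ⁻¹'
      {b | b.1 = true → b.2 = true → (p.1 = q.1 → p = q) ∧ (p.1 < q.1 → q.2 < p.2)} := by
    ext f
    simp only [mem_XSpace_iff, isDecGraph_iff_of_wellFoundedLT, supp, mem_iInter, mem_preimage,
      mem_ofPred_eq]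
    exact ⟨fun h p q hp hq => h p hp q hq, fun h p hp q hq => h p q hp hq⟩
  rw [this]
  exact isClosed_iInter fun p => isClosed_iInter fun q =>
    (isClosed_discrete _).preimage ((continuous_apply p).prodMk (continuous_apply q))

instance [WellFoundedLT T] : CompactSpace (XSpace T) :=
  isCompact_iff_compactSpace.1 isClosed_XSpace.isCompact

def XSpace.erase (s : T × T) (x : XSpace T) : XSpace T :=
  ⟨Function.update x.1 s false, by
    rw [mem_XSpace_iff, supp_update_false]
    exact (mem_XSpace_iff.1 x.2).mono sdiff_subset⟩

theorem XSpace.continuous_erase (s : T × T) : Continuous (XSpace.erase s) :=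
  (continuous_subtype_val.update s continuous_const).subtype_mk _

end XSpace

section LargeErase
variable {T H : Type*} [LinearOrder T] [NormedAddCommGroup H] [InnerProductSpace ℝ H]
  {f : XSpace T → H}

theorem exists_pos_le_norm_sub_erase [WellFoundedLT T]
    (hf : ∀ v, Continuous fun x => ⟪v, f x⟫) (hinj : Function.Injective f) (s : T × T) :
    ∃ ε > 0, ∀ x : XSpace T, x.1 s = true → ε ≤ ‖f x - f (XSpace.erase s x)‖ := by
  have hK : IsCompact {x : XSpace T | x.1 s = true} :=
    (isClosed_eq ((continuous_apply s).comp continuous_subtype_val) continuous_const).isCompact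
  refine hK.exists_pos_le_norm_of_continuous_inner (fun v => ?_) fun x hx => sub_ne_zero.2 ?_
  · simp_rw [inner_sub_right]
    exact (hf v).sub ((hf v).comp (XSpace.continuous_erase s))
  · refine hinj.ne fun h => ?_
    have hs := congr_fun (congrArg Subtype.val h) s
    simp only [XSpace.erase, Function.update_self] at hs
    exact Bool.false_ne_true (hs.symm.trans hx)

variable (f) in
def largeEraseSet (δ : ℝ) : Set (T × T) :=
  {s | ∀ x : XSpace T, x.1 s = true → δ ≤ ‖f x - f (XSpace.erase s x)‖}

theorem iUnion_largeEraseSet [WellFoundedLT T] (hf : ∀ v, Continuous fun x => ⟪v, f x⟫)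
    (hinj : Function.Injective f) : ⋃ n : ℕ, largeEraseSet f (1 / (n + 1)) = Set.univ := by
  refine eq_univ_of_forall fun s => ?_
  obtain ⟨ε, hε, hgap⟩ := exists_pos_le_norm_sub_erase hf hinj s
  obtain ⟨n, hn⟩ := exists_nat_one_div_lt hε
  exact mem_iUnion.2 ⟨n, fun x hx => hn.le.trans (hgap x hx)⟩

end LargeErase

namespace Omega1

instance : Nonempty Omega1 := ⟨⟨0, by simpa using Ordinal.omega_pos 1⟩⟩

instance : NoMaxOrder Omega1 :=
  ⟨fun γ => ⟨⟨Order.succ γ.1, (isSuccLimit_ord (aleph0_le_aleph 1)).succ_lt γ.2⟩,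
    Order.lt_succ γ.1⟩⟩

theorem countable_Iio (γ : Omega1) : (Iio γ).Countable := by
  have h : (Iio γ.1).Countable := by
    rw [← le_aleph0_iff_set_countable, mk_Iio_ordinal, lift_le_aleph0, ← lt_aleph_one_iff]
    exact Cardinal.lt_ord.1 γ.2
  exact h.preimage Subtype.val_injective

theorem not_countable_univ : ¬ (univ : Set Omega1).Countable := by
  rw [← le_aleph0_iff_set_countable, mk_univ, mk_Iio_ordinal.{0}, lift_le_aleph0, card_ord,
    ← lt_aleph_one_iff]
  exact lt_irrefl _

theorem exists_mem_of_eventually_cofinite_of_eventually_atTop {S : Set Omega1}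
    (hS : ¬ S.Countable) {P Q : Omega1 → Prop} (hP : ∀ᶠ β in cofinite, P β)
    (hQ : ∀ᶠ β in atTop, Q β) : ∃ β ∈ S, P β ∧ Q β := by
  obtain ⟨γ, hγ⟩ := eventually_atTop.1 hQ
  by_contra! h
  refine hS (((eventually_cofinite.1 hP).countable.union (countable_Iio γ)).mono fun β hβ => ?_)
  by_cases hβγ : γ ≤ β
  · exact Or.inl fun hPβ => h β hβ hPβ (hγ β hβγ)
  · exact Or.inr (not_le.1 hβγ)

theorem exists_not_countable_setOf_vertSection {S : ℕ → Set (Omega1 × Omega1)}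
    (hS : ⋃ n, S n = Set.univ) : ∃ n, ¬ {α | ¬ (vertSection (S n) α).Countable}.Countable := by
  by_contra! h
  obtain ⟨α, hα⟩ := (not_subset.1 fun h' => not_countable_univ ((countable_iUnion h).mono h'))
  simp only [mem_univ, mem_iUnion, mem_ofPred_eq, not_exists, not_not, true_and] at hα
  refine not_countable_univ ((countable_iUnion hα).mono fun β _ => ?_)
  obtain ⟨n, hn⟩ := mem_iUnion.1 (hS.symm ▸ mem_univ (α, β))
  exact mem_iUnion.2 ⟨n, hn⟩

end Omega1

section Construction
variable {H : Type*} [NormedAddCommGroup H] [InnerProductSpace ℝ H] {f : XSpace Omega1 → H}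

theorem exists_supp_eq_insert_sq_norm_add_le (hf : ∀ v, Continuous fun x => ⟪v, f x⟫)
    {δ : ℝ} (hδ : 0 < δ) {α : Omega1} (hα : ¬ (vertSection (largeEraseSet f δ) α).Countable)
    (x : XSpace Omega1) (hx : ∀ p ∈ supp x.1, α < p.1) :
    ∃ β, ∃ y : XSpace Omega1, supp y.1 = insert (α, β) (supp x.1) ∧
      ‖f x‖ ^ 2 + δ ^ 2 / 2 ≤ ‖f y‖ ^ 2 := by
  have hxF := mem_XSpace_iff.1 x.2
  have hN : {z | |⟪f x, f z - f x⟫| < δ ^ 2 / 4} ∈ 𝓝 x := by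
    refine (isOpen_lt ?_ continuous_const).mem_nhds (by simpa using by positivity)
    simp_rw [inner_sub_right]
    exact ((hf (f x)).sub continuous_const).abs
  obtain ⟨V, hV, hVN⟩ := (mem_nhds_subtype _ _ _).1 hN
  have hP : ∀ᶠ β in cofinite, Function.update x.1 (α, β) true ∈ V :=
    (Prod.mk_right_injective α).tendsto_cofinite.eventually
      ((tendsto_update_cofinite x.1 true).eventually hV)
  have hQ : ∀ᶠ β in atTop, ∀ p ∈ supp x.1, p.2 < β :=
    hxF.1.eventually_all.2 fun p _ => eventually_gt_atTop p.2
  obtain ⟨β, hβB, hβV, hβlt⟩ :=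
    Omega1.exists_mem_of_eventually_cofinite_of_eventually_atTop hα hP hQ
  have hy : Function.update x.1 (α, β) true ∈ XSpace Omega1 := by
    rw [mem_XSpace_iff, supp_update_true]
    exact hxF.insert fun p hp => ⟨hx p hp, hβlt p hp⟩
  set y : XSpace Omega1 := ⟨_, hy⟩
  have hxα : x.1 (α, β) = false := Bool.eq_false_iff.2 fun h => lt_irrefl α (hx _ h)
  have herase : XSpace.erase (α, β) y = x := Subtype.ext <| by
    change Function.update (Function.update x.1 (α, β) true) (α, β) false = x.1
    rw [Function.update_idem, Function.update_eq_self_iff, hxα]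
  have hfar : δ ≤ ‖f y - f x‖ := herase ▸ hβB y (by simp [y])
  have hnear : |⟪f x, f y - f x⟫| < δ ^ 2 / 4 := hVN hβV
  have hexpand : ‖f y‖ ^ 2 = ‖f x‖ ^ 2 + 2 * ⟪f x, f y - f x⟫ + ‖f y - f x‖ ^ 2 := by
    rw [← norm_add_sq_real, add_sub_cancel]
  refine ⟨β, y, supp_update_true _ _, ?_⟩
  nlinarith [abs_le.1 hnear.le]

theorem exists_card_mul_le_sq_norm (hf : ∀ v, Continuous fun x => ⟪v, f x⟫) {δ : ℝ} (hδ : 0 < δ)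
    (s : Finset Omega1) (hs : ∀ α ∈ s, ¬ (vertSection (largeEraseSet f δ) α).Countable) :
    ∃ x : XSpace Omega1, (∀ p ∈ supp x.1, p.1 ∈ s) ∧ s.card * (δ ^ 2 / 2) ≤ ‖f x‖ ^ 2 := by
  induction s using Finset.induction_on_min with
  | empty =>
    exact ⟨⟨chi ∅, ∅, ⟨finite_empty, by simp, by simp⟩, rfl⟩, by simp [supp_chi], by simp⟩
  | insert a s ha ih =>
    obtain ⟨x, hxs, hx⟩ := ih fun α hα => hs α (Finset.mem_insert_of_mem hα)
    obtain ⟨β, y, hy, hfy⟩ := exists_supp_eq_insert_sq_norm_add_le hf hδ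
      (hs a (Finset.mem_insert_self a s)) x fun p hp => ha p.1 (hxs p hp)
    refine ⟨y, fun p hp => ?_, ?_⟩
    · rw [hy] at hp
      rcases hp with rfl | hp
      · exact Finset.mem_insert_self _ _
      · exact Finset.mem_insert_of_mem (hxs p hp)
    · rw [Finset.card_insert_of_notMem fun h => lt_irrefl a (ha a h)]
      push_cast
      linarith

end Construction

/-- The space `𝒳` is not a uniform Eberlein compactum: there is no Hilbert space `H`
and no topological embedding of `𝒳` into `H` equipped with its weak topology. -/
theorem XSpace_not_uniformEberlein
    (H : Type u) [NormedAddCommGroup H] [InnerProductSpace ℝ H] [CompleteSpace H]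
    (φ : ↥(XSpace Omega1) → WeakSpace ℝ H) :
    ¬ IsEmbedding φ := by
  intro hφ
  set f : XSpace Omega1 → H := (toWeakSpace ℝ H).symm ∘ φ
  have hf : ∀ v, Continuous fun x => ⟪v, f x⟫ := continuous_inner_symm_toWeakSpace hφ.continuous
  have hinj : Function.Injective f := (toWeakSpace ℝ H).symm.injective.comp hφ.injective
  obtain ⟨C, hC⟩ := exists_norm_le_of_continuous_inner hf
  obtain ⟨n, hn⟩ := Omega1.exists_not_countable_setOf_vertSection (iUnion_largeEraseSet hf hinj)
  set δ : ℝ := 1 / (n + 1)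
  have hδ : 0 < δ := by positivity
  obtain ⟨k, hk⟩ := exists_nat_gt (C ^ 2 / (δ ^ 2 / 2))
  have hinf : {α | ¬ (vertSection (largeEraseSet f δ) α).Countable}.Infinite :=
    fun h => hn h.countable
  obtain ⟨s, hsA, rfl⟩ := hinf.exists_subset_card_eq k
  obtain ⟨x, -, hx⟩ := exists_card_mul_le_sq_norm hf hδ s hsA
  have hxC : ‖f x‖ ^ 2 ≤ C ^ 2 := pow_le_pow_left₀ (norm_nonneg _) (hC x) 2
  rw [div_lt_iff₀ (by positivity)] at hk
  linarith

end
end
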